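/- Let M ∈ G_q and set f := Tr M ∈ ℤ[q, q⁻¹], and let ω ∈ ℂ be a primitive cube root of unity. The following are equivalent: (i) ev₁(f) is divisible by 3; (ii) ev_ω(f) = 0; (iii) f is divisible by 1 + q + q² in ℤ[q, q⁻¹]. -/
import Mathlib

open LaurentPolynomial

/-- Eisenstein-integer-like pairs `a + b·ω`. -/
structure Eis where
  a : ℤ
  b : ℤ
deriving DecidableEq

def Eis.add (x y : Eis) : Eis := ⟨x.a + y.a, x.b + y.b⟩
def Eis.mul (x y : Eis) : Eis := ⟨x.a * y.a - x.b * y.b, x.a * y.b + x.b * y.a - x.b * y.b⟩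

noncomputable def Eis.toC (ω : ℂ) (e : Eis) : ℂ := (e.a : ℂ) + (e.b : ℂ) * ω
def Eis.toZ3 (e : Eis) : ZMod 3 := (e.a : ZMod 3) + (e.b : ZMod 3)

lemma Eis.toC_add (ω : ℂ) (x y : Eis) : (x.add y).toC ω = x.toC ω + y.toC ω := by
  simp only [Eis.toC, Eis.add]; push_cast; ring

lemma Eis.toC_mul {ω : ℂ} (h : ω ^ 2 + ω + 1 = 0) (x y : Eis) :
    (x.mul y).toC ω = x.toC ω * y.toC ω := by
  simp only [Eis.toC, Eis.mul]; push_cast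
  linear_combination (-(x.b * y.b) : ℂ) * h

lemma Eis.toZ3_add (x y : Eis) : (x.add y).toZ3 = x.toZ3 + y.toZ3 := by
  simp only [Eis.toZ3, Eis.add]; push_cast; ring

lemma Eis.toZ3_mul (x y : Eis) : (x.mul y).toZ3 = x.toZ3 * y.toZ3 := by
  simp only [Eis.toZ3, Eis.mul]; push_cast
  have h3 : (3 : ZMod 3) = 0 := rfl
  linear_combination (-((x.b : ZMod 3) * (y.b : ZMod 3))) * h3

structure M2 where
  x : Eis
  y : Eis
  z : Eis
  w : Eis
deriving DecidableEq

def M2.mul (M N : M2) : M2 :=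
  ⟨(M.x.mul N.x).add (M.y.mul N.z), (M.x.mul N.y).add (M.y.mul N.w),
   (M.z.mul N.x).add (M.w.mul N.z), (M.z.mul N.y).add (M.w.mul N.w)⟩

def M2.one : M2 := ⟨⟨1,0⟩,⟨0,0⟩,⟨0,0⟩,⟨1,0⟩⟩

noncomputable def M2.toMC (ω : ℂ) (N : M2) : Matrix (Fin 2) (Fin 2) ℂ :=
  !![N.x.toC ω, N.y.toC ω; N.z.toC ω, N.w.toC ω]

def M2.toM3 (N : M2) : Matrix (Fin 2) (Fin 2) (ZMod 3) :=
  !![N.x.toZ3, N.y.toZ3; N.z.toZ3, N.w.toZ3]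

lemma M2.toMC_mul {ω : ℂ} (h : ω ^ 2 + ω + 1 = 0) (N P : M2) :
    (N.mul P).toMC ω = N.toMC ω * P.toMC ω := by
  rw [M2.toMC, M2.toMC, M2.toMC, Matrix.mul_fin_two]
  simp only [M2.mul, Eis.toC_add, Eis.toC_mul h]

lemma M2.toM3_mul (N P : M2) : (N.mul P).toM3 = N.toM3 * P.toM3 := by
  rw [M2.toM3, M2.toM3, M2.toM3, Matrix.mul_fin_two]
  simp only [M2.mul, Eis.toZ3_add, Eis.toZ3_mul]

lemma M2.toMC_one (ω : ℂ) : M2.one.toMC ω = 1 := by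
  rw [M2.toMC, Matrix.one_fin_two]
  norm_num [M2.one, Eis.toC]

lemma M2.toM3_one : M2.one.toM3 = 1 := by
  rw [M2.toM3, Matrix.one_fin_two]
  norm_num [M2.one, Eis.toZ3]

set_option maxHeartbeats 1000000 in
def L : List M2 := [
  ⟨⟨-1,-1⟩,⟨0,0⟩,⟨-1,-1⟩,⟨0,1⟩⟩, ⟨⟨-1,-1⟩,⟨0,0⟩,⟨-1,0⟩,⟨1,0⟩⟩, ⟨⟨-1,-1⟩,⟨0,0⟩,⟨0,0⟩,⟨-1,-1⟩⟩,
  ⟨⟨-1,-1⟩,⟨0,1⟩,⟨-1,-1⟩,⟨1,1⟩⟩, ⟨⟨-1,-1⟩,⟨0,1⟩,⟨-1,0⟩,⟨0,0⟩⟩, ⟨⟨-1,-1⟩,⟨0,1⟩,⟨0,0⟩,⟨0,1⟩⟩,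
  ⟨⟨-1,-1⟩,⟨1,1⟩,⟨-1,-1⟩,⟨0,0⟩⟩, ⟨⟨-1,-1⟩,⟨1,1⟩,⟨-1,0⟩,⟨1,1⟩⟩, ⟨⟨-1,-1⟩,⟨1,1⟩,⟨0,0⟩,⟨1,0⟩⟩,
  ⟨⟨-1,0⟩,⟨0,0⟩,⟨-1,0⟩,⟨1,1⟩⟩, ⟨⟨-1,0⟩,⟨0,0⟩,⟨0,0⟩,⟨-1,0⟩⟩, ⟨⟨-1,0⟩,⟨0,0⟩,⟨0,1⟩,⟨0,-1⟩⟩,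
  ⟨⟨-1,0⟩,⟨1,0⟩,⟨-1,0⟩,⟨0,0⟩⟩, ⟨⟨-1,0⟩,⟨1,0⟩,⟨0,0⟩,⟨0,-1⟩⟩, ⟨⟨-1,0⟩,⟨1,0⟩,⟨0,1⟩,⟨1,0⟩⟩,
  ⟨⟨-1,0⟩,⟨1,1⟩,⟨-1,0⟩,⟨1,0⟩⟩, ⟨⟨-1,0⟩,⟨1,1⟩,⟨0,0⟩,⟨1,1⟩⟩, ⟨⟨-1,0⟩,⟨1,1⟩,⟨0,1⟩,⟨0,0⟩⟩,
  ⟨⟨0,-1⟩,⟨-1,0⟩,⟨-1,-1⟩,⟨0,0⟩⟩, ⟨⟨0,-1⟩,⟨-1,0⟩,⟨0,-1⟩,⟨0,1⟩⟩, ⟨⟨0,-1⟩,⟨-1,0⟩,⟨0,0⟩,⟨-1,0⟩⟩,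
  ⟨⟨0,-1⟩,⟨0,0⟩,⟨-1,-1⟩,⟨1,1⟩⟩, ⟨⟨0,-1⟩,⟨0,0⟩,⟨0,-1⟩,⟨-1,0⟩⟩, ⟨⟨0,-1⟩,⟨0,0⟩,⟨0,0⟩,⟨0,-1⟩⟩,
  ⟨⟨0,-1⟩,⟨0,1⟩,⟨-1,-1⟩,⟨0,1⟩⟩, ⟨⟨0,-1⟩,⟨0,1⟩,⟨0,-1⟩,⟨0,0⟩⟩, ⟨⟨0,-1⟩,⟨0,1⟩,⟨0,0⟩,⟨1,1⟩⟩,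
  ⟨⟨0,0⟩,⟨-1,-1⟩,⟨-1,0⟩,⟨0,0⟩⟩, ⟨⟨0,0⟩,⟨-1,-1⟩,⟨0,-1⟩,⟨-1,0⟩⟩, ⟨⟨0,0⟩,⟨-1,-1⟩,⟨1,1⟩,⟨-1,-1⟩⟩,
  ⟨⟨0,0⟩,⟨-1,0⟩,⟨-1,-1⟩,⟨0,1⟩⟩, ⟨⟨0,0⟩,⟨-1,0⟩,⟨0,1⟩,⟨0,0⟩⟩, ⟨⟨0,0⟩,⟨-1,0⟩,⟨1,0⟩,⟨-1,0⟩⟩,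
  ⟨⟨0,0⟩,⟨0,-1⟩,⟨-1,-1⟩,⟨0,0⟩⟩, ⟨⟨0,0⟩,⟨0,-1⟩,⟨0,1⟩,⟨0,-1⟩⟩, ⟨⟨0,0⟩,⟨0,-1⟩,⟨1,0⟩,⟨-1,-1⟩⟩,
  ⟨⟨0,0⟩,⟨0,1⟩,⟨-1,0⟩,⟨1,1⟩⟩, ⟨⟨0,0⟩,⟨0,1⟩,⟨0,-1⟩,⟨0,1⟩⟩, ⟨⟨0,0⟩,⟨0,1⟩,⟨1,1⟩,⟨0,0⟩⟩,
  ⟨⟨0,0⟩,⟨1,0⟩,⟨-1,0⟩,⟨1,0⟩⟩, ⟨⟨0,0⟩,⟨1,0⟩,⟨0,-1⟩,⟨0,0⟩⟩, ⟨⟨0,0⟩,⟨1,0⟩,⟨1,1⟩,⟨0,-1⟩⟩,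
  ⟨⟨0,0⟩,⟨1,1⟩,⟨-1,-1⟩,⟨1,1⟩⟩, ⟨⟨0,0⟩,⟨1,1⟩,⟨0,1⟩,⟨1,0⟩⟩, ⟨⟨0,0⟩,⟨1,1⟩,⟨1,0⟩,⟨0,0⟩⟩,
  ⟨⟨0,1⟩,⟨0,-1⟩,⟨0,0⟩,⟨-1,-1⟩⟩, ⟨⟨0,1⟩,⟨0,-1⟩,⟨0,1⟩,⟨0,0⟩⟩, ⟨⟨0,1⟩,⟨0,-1⟩,⟨1,1⟩,⟨0,-1⟩⟩,
  ⟨⟨0,1⟩,⟨0,0⟩,⟨0,0⟩,⟨0,1⟩⟩, ⟨⟨0,1⟩,⟨0,0⟩,⟨0,1⟩,⟨1,0⟩⟩, ⟨⟨0,1⟩,⟨0,0⟩,⟨1,1⟩,⟨-1,-1⟩⟩,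
  ⟨⟨0,1⟩,⟨1,0⟩,⟨0,0⟩,⟨1,0⟩⟩, ⟨⟨0,1⟩,⟨1,0⟩,⟨0,1⟩,⟨0,-1⟩⟩, ⟨⟨0,1⟩,⟨1,0⟩,⟨1,1⟩,⟨0,0⟩⟩,
  ⟨⟨1,0⟩,⟨-1,-1⟩,⟨0,-1⟩,⟨0,0⟩⟩, ⟨⟨1,0⟩,⟨-1,-1⟩,⟨0,0⟩,⟨-1,-1⟩⟩, ⟨⟨1,0⟩,⟨-1,-1⟩,⟨1,0⟩,⟨-1,0⟩⟩,
  ⟨⟨1,0⟩,⟨-1,0⟩,⟨0,-1⟩,⟨-1,0⟩⟩, ⟨⟨1,0⟩,⟨-1,0⟩,⟨0,0⟩,⟨0,1⟩⟩, ⟨⟨1,0⟩,⟨-1,0⟩,⟨1,0⟩,⟨0,0⟩⟩,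
  ⟨⟨1,0⟩,⟨0,0⟩,⟨0,-1⟩,⟨0,1⟩⟩, ⟨⟨1,0⟩,⟨0,0⟩,⟨0,0⟩,⟨1,0⟩⟩, ⟨⟨1,0⟩,⟨0,0⟩,⟨1,0⟩,⟨-1,-1⟩⟩,
  ⟨⟨1,1⟩,⟨-1,-1⟩,⟨0,0⟩,⟨-1,0⟩⟩, ⟨⟨1,1⟩,⟨-1,-1⟩,⟨1,0⟩,⟨-1,-1⟩⟩, ⟨⟨1,1⟩,⟨-1,-1⟩,⟨1,1⟩,⟨0,0⟩⟩,
  ⟨⟨1,1⟩,⟨0,-1⟩,⟨0,0⟩,⟨0,-1⟩⟩, ⟨⟨1,1⟩,⟨0,-1⟩,⟨1,0⟩,⟨0,0⟩⟩, ⟨⟨1,1⟩,⟨0,-1⟩,⟨1,1⟩,⟨-1,-1⟩⟩,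
  ⟨⟨1,1⟩,⟨0,0⟩,⟨0,0⟩,⟨1,1⟩⟩, ⟨⟨1,1⟩,⟨0,0⟩,⟨1,0⟩,⟨-1,0⟩⟩, ⟨⟨1,1⟩,⟨0,0⟩,⟨1,1⟩,⟨0,-1⟩⟩]

def Rgen : M2 := ⟨⟨0,1⟩,⟨1,0⟩,⟨0,0⟩,⟨1,0⟩⟩
def Sgen : M2 := ⟨⟨0,0⟩,⟨1,1⟩,⟨1,0⟩,⟨0,0⟩⟩
def Rinv : M2 := ⟨⟨-1,-1⟩,⟨1,1⟩,⟨0,0⟩,⟨1,0⟩⟩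
def Sinv : M2 := ⟨⟨0,0⟩,⟨1,0⟩,⟨0,-1⟩,⟨0,0⟩⟩

set_option maxRecDepth 100000 in
set_option maxHeartbeats 3000000 in
theorem Lgen : ∀ N ∈ L, Rgen.mul N ∈ L ∧ Sgen.mul N ∈ L ∧ Rinv.mul N ∈ L ∧ Sinv.mul N ∈ L := by
  decide

theorem Lunits : Rgen.mul Rinv = M2.one ∧ Rinv.mul Rgen = M2.one ∧
    Sgen.mul Sinv = M2.one ∧ Sinv.mul Sgen = M2.one := by decide

theorem Lbase : M2.one ∈ L := by decide

set_option maxRecDepth 100000 in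
theorem Ltr : ∀ N ∈ L,
    ((((N.x.add N.w).a + (N.x.add N.w).b) % 3 = 0) ↔ N.x.add N.w = ⟨0, 0⟩) := by decide
/-- The matrix `R_q` over the Laurent polynomial ring `ℤ[q, q⁻¹]`. -/
noncomputable def Rq : Matrix (Fin 2) (Fin 2) (LaurentPolynomial ℤ) := !![T 1, 1; 0, 1]

/-- The matrix `S_q` over the Laurent polynomial ring `ℤ[q, q⁻¹]`. -/
noncomputable def Sq : Matrix (Fin 2) (Fin 2) (LaurentPolynomial ℤ) :=
  !![0, -(T (-1)); 1, 0]

/-- The subgroup `G_q` of `GL(2, ℤ[q, q⁻¹])` generated by `R_q` and `S_q`. -/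
noncomputable def Gq : Subgroup (Matrix.GeneralLinearGroup (Fin 2) (LaurentPolynomial ℤ)) :=
  Subgroup.closure {A : Matrix.GeneralLinearGroup (Fin 2) (LaurentPolynomial ℤ) |
    (A : Matrix (Fin 2) (Fin 2) (LaurentPolynomial ℤ)) = Rq ∨
    (A : Matrix (Fin 2) (Fin 2) (LaurentPolynomial ℤ)) = Sq}

/-- Corollary on traces at a primitive cube root of unity. -/
theorem trace_at_omega_tfae (M : Matrix.GeneralLinearGroup (Fin 2) (LaurentPolynomial ℤ))
    (hM : M ∈ Gq) (f : LaurentPolynomial ℤ)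
    (hf : f = Matrix.trace (M : Matrix (Fin 2) (Fin 2) (LaurentPolynomial ℤ)))
    (ω : ℂ) (hω : IsPrimitiveRoot ω 3)
    (ev₁ : LaurentPolynomial ℤ →+* ℤ) (hev₁ : ev₁ (T 1) = 1)
    (evω : LaurentPolynomial ℤ →+* ℂ) (hevω : evω (T 1) = ω) :
    ((3 : ℤ) ∣ ev₁ f ↔ evω f = 0) ∧
    (evω f = 0 ↔ (1 + T 1 + T 2 : LaurentPolynomial ℤ) ∣ f) := by
  have hω3 : ω ^ 3 = 1 := hω.pow_eq_one
  have hωne1 : ω ≠ 1 := hω.ne_one (by norm_num)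
  have h : ω ^ 2 + ω + 1 = 0 := by
    have h0 : (ω - 1) * (ω ^ 2 + ω + 1) = 0 := by linear_combination hω3
    rcases mul_eq_zero.1 h0 with h1 | h1
    · exact absurd (sub_eq_zero.1 h1) hωne1
    · exact h1
  have hωne0 : ω ≠ 0 := by
    intro e; rw [e] at hω3; norm_num at hω3
  -- values of the evaluations on T (-1)
  have hTm1 : (T (-1) * T 1 : LaurentPolynomial ℤ) = 1 := by
    have e : ((-1 : ℤ) + 1) = 0 := by norm_num
    rw [← T_add, e, T_zero]
  have hevωTm : evω (T (-1)) = -1 - ω := by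
    have hx : evω (T (-1)) * ω = 1 := by
      rw [← hevω, ← map_mul, hTm1, map_one]
    have h2 : (evω (T (-1)) - (-1 - ω)) * ω = 0 := by linear_combination hx + h
    rcases mul_eq_zero.1 h2 with h3 | h3
    · exact sub_eq_zero.1 h3
    · exact absurd h3 hωne0
  have hev₁Tm : ev₁ (T (-1)) = 1 := by
    have hx : ev₁ (T (-1)) * ev₁ (T 1) = 1 := by rw [← map_mul, hTm1, map_one]
    rwa [hev₁, mul_one] at hx
  set ψ : LaurentPolynomial ℤ →+* ZMod 3 := (Int.castRingHom (ZMod 3)).comp ev₁ with hψdef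
  -- base matrices
  have hRω : evω.mapMatrix Rq = Rgen.toMC ω := by
    ext i j
    fin_cases i <;> fin_cases j <;>
      simp [Rq, Rgen, M2.toMC, Eis.toC, hevω, RingHom.mapMatrix_apply]
  have hSω : evω.mapMatrix Sq = Sgen.toMC ω := by
    ext i j
    fin_cases i <;> fin_cases j <;>
      simp [Sq, Sgen, M2.toMC, Eis.toC, hevωTm, RingHom.mapMatrix_apply] <;> ring
  have hR3 : ψ.mapMatrix Rq = Rgen.toM3 := by
    ext i j
    fin_cases i <;> fin_cases j <;>
      simp [Rq, Rgen, M2.toM3, Eis.toZ3, hψdef, hev₁, RingHom.mapMatrix_apply]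
  have hS3 : ψ.mapMatrix Sq = Sgen.toM3 := by
    ext i j
    fin_cases i <;> fin_cases j <;>
      simp [Sq, Sgen, M2.toM3, Eis.toZ3, hψdef, hev₁Tm, RingHom.mapMatrix_apply] <;> decide
  -- the invariant
  have key : ∀ N : Matrix.GeneralLinearGroup (Fin 2) (LaurentPolynomial ℤ), N ∈ Gq →
      ∃ P ∈ L, evω.mapMatrix (N : Matrix (Fin 2) (Fin 2) (LaurentPolynomial ℤ)) = P.toMC ω ∧
        ψ.mapMatrix (N : Matrix (Fin 2) (Fin 2) (LaurentPolynomial ℤ)) = P.toM3 := by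
    intro N hN
    induction hN using Subgroup.closure_induction_left with
    | one =>
      exact ⟨M2.one, Lbase, by rw [Units.val_one, map_one, M2.toMC_one],
        by rw [Units.val_one, map_one, M2.toM3_one]⟩
    | mul_left x hx y hy ih =>
      obtain ⟨P, hP, e1, e2⟩ := ih
      rcases hx with hx | hx
      · refine ⟨Rgen.mul P, (Lgen P hP).1, ?_, ?_⟩
        · rw [Units.val_mul, map_mul, hx, hRω, e1, M2.toMC_mul h]
        · rw [Units.val_mul, map_mul, hx, hR3, e2, M2.toM3_mul]
      · refine ⟨Sgen.mul P, (Lgen P hP).2.1, ?_, ?_⟩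
        · rw [Units.val_mul, map_mul, hx, hSω, e1, M2.toMC_mul h]
        · rw [Units.val_mul, map_mul, hx, hS3, e2, M2.toM3_mul]
    | inv_mul_cancel x hx y hy ih =>
      obtain ⟨P, hP, e1, e2⟩ := ih
      have hxinvω : ∀ (g gi : M2), (evω.mapMatrix (x : Matrix (Fin 2) (Fin 2) _) = g.toMC ω) →
          g.mul gi = M2.one →
          evω.mapMatrix ((x⁻¹ : _) : Matrix (Fin 2) (Fin 2) (LaurentPolynomial ℤ)) = gi.toMC ω := by
        intro g gi eg hgi
        refine left_inv_eq_right_inv (b := evω.mapMatrix _)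
          (a := evω.mapMatrix (x : Matrix (Fin 2) (Fin 2) (LaurentPolynomial ℤ))) ?_ ?_
        · rw [← map_mul, ← Units.val_mul, inv_mul_cancel, Units.val_one, map_one]
        · rw [eg, ← M2.toMC_mul h, hgi, M2.toMC_one]
      have hxinv3 : ∀ (g gi : M2), (ψ.mapMatrix (x : Matrix (Fin 2) (Fin 2) _) = g.toM3) →
          g.mul gi = M2.one →
          ψ.mapMatrix ((x⁻¹ : _) : Matrix (Fin 2) (Fin 2) (LaurentPolynomial ℤ)) = gi.toM3 := by
        intro g gi eg hgi
        refine left_inv_eq_right_inv (b := ψ.mapMatrix _)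
          (a := ψ.mapMatrix (x : Matrix (Fin 2) (Fin 2) (LaurentPolynomial ℤ))) ?_ ?_
        · rw [← map_mul, ← Units.val_mul, inv_mul_cancel, Units.val_one, map_one]
        · rw [eg, ← M2.toM3_mul, hgi, M2.toM3_one]
      rcases hx with hx | hx
      · refine ⟨Rinv.mul P, (Lgen P hP).2.2.1, ?_, ?_⟩
        · rw [Units.val_mul, map_mul, hxinvω Rgen Rinv (by rw [hx, hRω]) Lunits.1, e1,
            M2.toMC_mul h]
        · rw [Units.val_mul, map_mul, hxinv3 Rgen Rinv (by rw [hx, hR3]) Lunits.1, e2,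
            M2.toM3_mul]
      · refine ⟨Sinv.mul P, (Lgen P hP).2.2.2, ?_, ?_⟩
        · rw [Units.val_mul, map_mul, hxinvω Sgen Sinv (by rw [hx, hSω]) Lunits.2.2.1, e1,
            M2.toMC_mul h]
        · rw [Units.val_mul, map_mul, hxinv3 Sgen Sinv (by rw [hx, hS3]) Lunits.2.2.1, e2,
            M2.toM3_mul]
  obtain ⟨P, hP, e1, e2⟩ := key M hM
  set t : Eis := P.x.add P.w with ht
  have trω : evω f = t.toC ω := by
    have h00 : evω ((M : Matrix (Fin 2) (Fin 2) (LaurentPolynomial ℤ)) 0 0) = P.x.toC ω := by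
      have := Matrix.ext_iff.2 e1 0 0
      simpa [RingHom.mapMatrix_apply, Matrix.map_apply, M2.toMC] using this
    have h11 : evω ((M : Matrix (Fin 2) (Fin 2) (LaurentPolynomial ℤ)) 1 1) = P.w.toC ω := by
      have := Matrix.ext_iff.2 e1 1 1
      simpa [RingHom.mapMatrix_apply, Matrix.map_apply, M2.toMC] using this
    rw [hf, Matrix.trace_fin_two, map_add, h00, h11, ht, Eis.toC_add]
  have tr3 : ((ev₁ f : ℤ) : ZMod 3) = t.toZ3 := by
    have h00 : ψ ((M : Matrix (Fin 2) (Fin 2) (LaurentPolynomial ℤ)) 0 0) = P.x.toZ3 := by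
      have := Matrix.ext_iff.2 e2 0 0
      simpa [RingHom.mapMatrix_apply, Matrix.map_apply, M2.toM3] using this
    have h11 : ψ ((M : Matrix (Fin 2) (Fin 2) (LaurentPolynomial ℤ)) 1 1) = P.w.toZ3 := by
      have := Matrix.ext_iff.2 e2 1 1
      simpa [RingHom.mapMatrix_apply, Matrix.map_apply, M2.toM3] using this
    have : ψ f = t.toZ3 := by
      rw [hf, Matrix.trace_fin_two, map_add, h00, h11, ht, Eis.toZ3_add]
    simpa [hψdef, RingHom.comp_apply] using this
  have c1 : (3 : ℤ) ∣ ev₁ f ↔ t = ⟨0, 0⟩ := by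
    rw [show (3 : ℤ) = ((3 : ℕ) : ℤ) by norm_num, ← ZMod.intCast_zmod_eq_zero_iff_dvd, tr3, ← Ltr P hP, Eis.toZ3, ← Int.cast_add,
      ZMod.intCast_zmod_eq_zero_iff_dvd, Int.dvd_iff_emod_eq_zero]
    rfl
  have c2 : evω f = 0 ↔ t = ⟨0, 0⟩ := by
    rw [trω, Eis.toC]
    constructor
    · intro h0
      have key2 : ((t.a : ℂ) ^ 2 - t.a * t.b + t.b ^ 2) = 0 := by
        linear_combination ((t.a : ℂ) - t.b - t.b * ω) * h0 + ((t.b : ℂ) ^ 2) * h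
      have key3 : (t.a ^ 2 - t.a * t.b + t.b ^ 2 : ℤ) = 0 := by exact_mod_cast key2
      have hb : t.b = 0 := by nlinarith [sq_nonneg (2 * t.a - t.b), sq_nonneg t.b]
      have ha : t.a = 0 := by nlinarith [sq_nonneg t.a]
      have : t = ⟨t.a, t.b⟩ := rfl
      rw [this, ha, hb]
    · intro h0
      rw [h0]
      norm_num
  refine ⟨c1.trans c2.symm, ?_⟩
  constructor
  · intro h0
    obtain ⟨n, p, hp⟩ := f.exists_T_pow
    have hθ : evω (Polynomial.toLaurent p) = 0 := by rw [hp, map_mul, h0, zero_mul]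
    have hhom : evω.comp (Polynomial.toLaurent (R := ℤ)) =
        (Polynomial.aeval ω : Polynomial ℤ →ₐ[ℤ] ℂ).toRingHom := by
      apply Polynomial.ringHom_ext
      · intro a
        simp [Polynomial.toLaurent_C, Polynomial.aeval_C, eq_intCast, map_intCast]
      · simp [Polynomial.toLaurent_X, hevω]
    have haev : Polynomial.aeval ω p = 0 := by
      have h2 := RingHom.congr_fun hhom p
      simp only [RingHom.comp_apply, AlgHom.toRingHom_eq_coe, RingHom.coe_coe] at h2
      rw [← h2]; exact hθ
    have hint : IsIntegral ℤ ω := by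
      refine ⟨Polynomial.X ^ 3 - 1, ?_, ?_⟩
      · simpa using Polynomial.monic_X_pow_sub_C (1 : ℤ) (by norm_num)
      · simp [hω3]
    have hmp : minpoly ℤ ω ∣ p := minpoly.isIntegrallyClosed_dvd hint haev
    have hcyc : minpoly ℤ ω = 1 + Polynomial.X + Polynomial.X ^ 2 := by
      rw [← Polynomial.cyclotomic_eq_minpoly hω (by norm_num)]
      haveI : Fact (Nat.Prime 3) := ⟨by norm_num⟩
      rw [Polynomial.cyclotomic_prime]
      simp [Finset.sum_range_succ]
    rw [hcyc] at hmp
    obtain ⟨g, hg⟩ := hmp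
    refine ⟨Polynomial.toLaurent g * T (-(n : ℤ)), ?_⟩
    have hTT : (T (n : ℤ) * T (-(n : ℤ)) : LaurentPolynomial ℤ) = 1 := by
      rw [← T_add]; simp
    have hone : Polynomial.toLaurent (R := ℤ) (1 + Polynomial.X + Polynomial.X ^ 2) =
        1 + T 1 + T 2 := by
      have h2 := Polynomial.toLaurent_X_pow (R := ℤ) 2
      push_cast at h2
      simp [Polynomial.toLaurent_X, h2]
    calc f = Polynomial.toLaurent p * T (-(n : ℤ)) := by
          rw [hp, mul_assoc, hTT, mul_one]
      _ = (1 + T 1 + T 2) * (Polynomial.toLaurent g * T (-(n : ℤ))) := by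
          rw [hg, map_mul, hone, ← mul_assoc]
  · rintro ⟨g, rfl⟩
    have hT2 : evω (T 2 : LaurentPolynomial ℤ) = ω ^ 2 := by
      have e : ((1 : ℤ) + 1) = 2 := by norm_num
      rw [← e, T_add, map_mul, hevω]; ring
    rw [map_mul]
    have : evω (1 + T 1 + T 2 : LaurentPolynomial ℤ) = 0 := by
      rw [map_add, map_add, map_one, hevω, hT2]
      linear_combination h
    rw [this, zero_mul]
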